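/- A closely connected GR-unitary colligation that is neither strictly closely connected nor shifted strictly closely connected: let P_1, P_2, A, B, C be the matrices of the GR-unitary realization of z_1 z_2 given in the context, and for z = (z_1, z_2) ∈ ℂ² set Z(z) := z_1 P_1 + z_2 P_2 and, when z_1 z_2 ≠ 0, W(z) := z_1^{-1} P_1 + z_2^{-1} P_2. Then: (i) the four vectors P_1 B, P_2 B, A P_1 B and C^T span ℂ^4 (so the colligation is closely connected); (ii) {h ∈ ℂ^4 : C (Z(z)A)^n h = 0 for all z ∈ ℂ² and all n ∈ ℕ} ∩ {h ∈ ℂ^4 : B^T W(z) (A^T W(z))^n h = 0 for all z ∈ ℂ² with z_1 z_2 ≠ 0 and all n ∈ ℕ} = ℂ·(0,0,1,0)^T, which is nonzero, so the colligation is not strictly closely connected; (iii) {h ∈ ℂ^4 : C (Z(z)A)^n Z(z) h = 0 for all z ∈ ℂ² and all n ∈ ℕ} ∩ {h ∈ ℂ^4 : B^T (Z(z) A^T)^n h = 0 for all z ∈ ℂ² and all n ∈ ℕ} = ℂ·(1,−1,0,0)^T, which is nonzero, so the colligation is not shifted strictly closely connected. -/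

import Mathlib

/-!
Both families of conditions stop after two terms: for every `z`, `C (Z(z) A)² = 0` and
`Bᵀ (Z(z) Aᵀ)² = 0`, and `W(z) = Z(z₁⁻¹, z₂⁻¹)`. So the first kernel in (ii) is cut out by
`C h = h₃` and `C Z(z) A h ∝ z₂ h₀ + z₁ h₁`, the second kernel in (iii) by `Bᵀ h ∝ h₀ + h₁` and
`Bᵀ Z(z) Aᵀ h ∝ (z₂ - z₁) h₂ + (z₁ + z₂) h₃` (coordinates indexed from 0, as in `Fin 4`).
Taking `z = (0, 1)` and `z = (1, 0)` leaves exactly the stated lines, on which the other family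
of conditions vanishes as well. For (i), `P₁B` and `P₂B` are multiples of `e₀` and `e₁`,
`A P₁ B = (e₃ - e₂) / 2` and `Cᵀ = e₃`.
-/

open scoped Matrix

noncomputable section

/-- `P₁`. -/
def P1 : Matrix (Fin 4) (Fin 4) ℂ :=
  !![1, 0, 0, 0; 0, 0, 0, 0; 0, 0, 1/2, 1/2; 0, 0, 1/2, 1/2]

/-- `P₂`. -/
def P2 : Matrix (Fin 4) (Fin 4) ℂ :=
  !![0, 0, 0, 0; 0, 1, 0, 0; 0, 0, 1/2, -(1/2); 0, 0, -(1/2), 1/2]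

/-- `A = (1/√2)·[[0,0,−1,0],[0,0,1,0],[−1,1,0,0],[1,1,0,0]]`. -/
def Am : Matrix (Fin 4) (Fin 4) ℂ :=
  ((Real.sqrt 2 : ℂ))⁻¹ • !![0, 0, -1, 0; 0, 0, 1, 0; -1, 1, 0, 0; 1, 1, 0, 0]

/-- `B = (1/√2)·(1,1,0,0)ᵀ` as a 4×1 column. -/
def Bm : Matrix (Fin 4) (Fin 1) ℂ :=
  ((Real.sqrt 2 : ℂ))⁻¹ • !![1; 1; 0; 0]

/-- `C = (0,0,0,1)` as a 1×4 row. -/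
def Cm : Matrix (Fin 1) (Fin 4) ℂ := !![0, 0, 0, 1]

/-- The column `B` as a vector in `ℂ⁴`. -/
def Bvec : Fin 4 → ℂ := fun i => Bm i 0

/-- The row `C` (i.e. `Cᵀ`) as a vector in `ℂ⁴`. -/
def Cvec : Fin 4 → ℂ := fun i => Cm 0 i

/-- `Z(z) = z₁ P₁ + z₂ P₂`. -/
def Zm (z1 z2 : ℂ) : Matrix (Fin 4) (Fin 4) ℂ := z1 • P1 + z2 • P2

/-- `W(z) = z₁⁻¹ P₁ + z₂⁻¹ P₂`. -/
def Wm (z1 z2 : ℂ) : Matrix (Fin 4) (Fin 4) ℂ := z1⁻¹ • P1 + z2⁻¹ • P2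

open Matrix

namespace Matrix

variable {m n R : Type*} [Fintype n] [DecidableEq n] [Semiring R] {M : Matrix m n R}
  {N : Matrix n n R}

theorem forall_mulVec_pow_mulVec_eq_zero_iff {k : ℕ} (hk : ∀ v, M *ᵥ (N ^ k *ᵥ v) = 0)
    (v : n → R) : (∀ j, M *ᵥ (N ^ j *ᵥ v) = 0) ↔ ∀ j < k, M *ᵥ (N ^ j *ᵥ v) = 0 := by
  refine ⟨fun h j _ => h j, fun h j => ?_⟩
  obtain hj | ⟨i, rfl⟩ := (lt_or_ge j k).imp_right Nat.exists_eq_add_of_le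
  · exact h j hj
  · rw [pow_add, ← mulVec_mulVec, hk]

theorem forall_mulVec_pow_mulVec_eq_zero_iff_of_sq (hN : ∀ v, M *ᵥ (N ^ 2 *ᵥ v) = 0)
    (v : n → R) : (∀ j, M *ᵥ (N ^ j *ᵥ v) = 0) ↔ M *ᵥ v = 0 ∧ M *ᵥ (N *ᵥ v) = 0 := by
  simp only [forall_mulVec_pow_mulVec_eq_zero_iff hN, Nat.forall_lt_succ_right,
    Nat.not_lt_zero, IsEmpty.forall_iff, forall_const, true_and, pow_zero, pow_one, one_mulVec]

end Matrix

lemma sqrt_two_inv_ne_zero : ((Real.sqrt 2 : ℂ))⁻¹ ≠ 0 := by simp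

lemma sqrt_two_inv_mul_self : ((Real.sqrt 2 : ℂ))⁻¹ * ((Real.sqrt 2 : ℂ))⁻¹ = 2⁻¹ := by
  rw [← mul_inv, ← Complex.ofReal_mul, Real.mul_self_sqrt zero_le_two, Complex.ofReal_ofNat]

lemma zm_mulVec (z1 z2 : ℂ) (h : Fin 4 → ℂ) :
    Zm z1 z2 *ᵥ h = ![z1 * h 0, z2 * h 1, ((z1 + z2) * h 2 + (z1 - z2) * h 3) / 2,
      ((z1 - z2) * h 2 + (z1 + z2) * h 3) / 2] := by
  ext i; fin_cases i <;> simp [Zm, P1, P2, mulVec, dotProduct, Fin.sum_univ_succ] <;> ring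

lemma am_mulVec (h : Fin 4 → ℂ) :
    Am *ᵥ h = ((Real.sqrt 2 : ℂ))⁻¹ • ![-h 2, h 2, h 1 - h 0, h 0 + h 1] := by
  ext i; fin_cases i <;> simp [Am, mulVec, dotProduct, Fin.sum_univ_succ] <;> ring

lemma am_transpose_mulVec (h : Fin 4 → ℂ) :
    Amᵀ *ᵥ h = ((Real.sqrt 2 : ℂ))⁻¹ • ![h 3 - h 2, h 2 + h 3, h 1 - h 0, 0] := by
  ext i; fin_cases i <;> simp [Am, mulVec, dotProduct, Fin.sum_univ_succ] <;> ring

lemma cm_mulVec_eq_zero_iff (h : Fin 4 → ℂ) : Cm *ᵥ h = 0 ↔ h 3 = 0 := by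
  simp [Cm, funext_iff, dotProduct, Fin.sum_univ_succ]

lemma bm_transpose_mulVec_eq_zero_iff (h : Fin 4 → ℂ) : Bmᵀ *ᵥ h = 0 ↔ h 0 + h 1 = 0 := by
  simp [Bm, funext_iff, mulVec, dotProduct, Fin.sum_univ_succ, ← mul_add]

lemma cm_mulVec_zm_mul_am_eq_zero_iff (z1 z2 : ℂ) (h : Fin 4 → ℂ) :
    Cm *ᵥ ((Zm z1 z2 * Am) *ᵥ h) = 0 ↔ z2 * h 0 + z1 * h 1 = 0 := by
  rw [← mulVec_mulVec, am_mulVec, mulVec_smul, mulVec_smul, smul_eq_zero,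
    or_iff_right sqrt_two_inv_ne_zero, cm_mulVec_eq_zero_iff, zm_mulVec]
  simp only [cons_val, div_eq_zero_iff, two_ne_zero, or_false]
  constructor
  · intro H; linear_combination H / 2
  · intro H; linear_combination 2 * H

lemma bm_transpose_mulVec_zm_mul_am_transpose_eq_zero_iff (z1 z2 : ℂ) (h : Fin 4 → ℂ) :
    Bmᵀ *ᵥ ((Zm z1 z2 * Amᵀ) *ᵥ h) = 0 ↔ (z2 - z1) * h 2 + (z1 + z2) * h 3 = 0 := by
  rw [← mulVec_mulVec, am_transpose_mulVec, mulVec_smul, mulVec_smul, smul_eq_zero,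
    or_iff_right sqrt_two_inv_ne_zero, bm_transpose_mulVec_eq_zero_iff, zm_mulVec]
  simp only [cons_val]
  constructor <;> intro H <;> linear_combination H

lemma cm_mulVec_zm_mul_am_sq_mulVec (z1 z2 : ℂ) (v : Fin 4 → ℂ) :
    Cm *ᵥ ((Zm z1 z2 * Am) ^ 2 *ᵥ v) = 0 := by
  rw [sq, ← mulVec_mulVec, cm_mulVec_zm_mul_am_eq_zero_iff, ← mulVec_mulVec, am_mulVec,
    mulVec_smul, zm_mulVec]
  simp only [cons_val, Pi.smul_apply, smul_eq_mul]
  ring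

lemma bm_transpose_mulVec_zm_mul_am_transpose_sq_mulVec (z1 z2 : ℂ) (v : Fin 4 → ℂ) :
    Bmᵀ *ᵥ ((Zm z1 z2 * Amᵀ) ^ 2 *ᵥ v) = 0 := by
  rw [sq, ← mulVec_mulVec, bm_transpose_mulVec_zm_mul_am_transpose_eq_zero_iff,
    ← mulVec_mulVec, am_transpose_mulVec, mulVec_smul, zm_mulVec]
  simp only [cons_val, Pi.smul_apply, smul_eq_mul]
  ring

lemma bm_transpose_mul_zm_mulVec_am_transpose_mul_zm_sq_mulVec (z1 z2 : ℂ) (v : Fin 4 → ℂ) :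
    (Bmᵀ * Zm z1 z2) *ᵥ ((Amᵀ * Zm z1 z2) ^ 2 *ᵥ v) = 0 := by
  have : (Bmᵀ * Zm z1 z2) * (Amᵀ * Zm z1 z2) ^ 2 = Bmᵀ * (Zm z1 z2 * Amᵀ) ^ 2 * Zm z1 z2 := by
    simp only [sq, Matrix.mul_assoc]
  rw [mulVec_mulVec, this, ← mulVec_mulVec, ← mulVec_mulVec,
    bm_transpose_mulVec_zm_mul_am_transpose_sq_mulVec]

lemma forall_cm_mulVec_zm_mul_am_pow_mulVec_eq_zero_iff (h : Fin 4 → ℂ) :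
    (∀ (z1 z2 : ℂ) (n : ℕ), Cm *ᵥ ((Zm z1 z2 * Am) ^ n *ᵥ h) = 0) ↔
      h 0 = 0 ∧ h 1 = 0 ∧ h 3 = 0 := by
  simp only [forall_mulVec_pow_mulVec_eq_zero_iff_of_sq (cm_mulVec_zm_mul_am_sq_mulVec _ _)]
  simp_rw [cm_mulVec_zm_mul_am_eq_zero_iff, cm_mulVec_eq_zero_iff]
  constructor
  · intro H
    obtain ⟨h3, h0⟩ := H 0 1
    obtain ⟨-, h1⟩ := H 1 0
    exact ⟨by simpa using h0, by simpa using h1, h3⟩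
  · rintro ⟨h0, h1, h3⟩ z1 z2
    simp [h0, h1, h3]

lemma bm_transpose_mulVec_zm_mulVec_am_transpose_mul_zm_pow_mulVec_eq_zero {h : Fin 4 → ℂ}
    (h0 : h 0 = 0) (h1 : h 1 = 0) (h3 : h 3 = 0) (z1 z2 : ℂ) (n : ℕ) :
    Bmᵀ *ᵥ (Zm z1 z2 *ᵥ ((Amᵀ * Zm z1 z2) ^ n *ᵥ h)) = 0 := by
  have hZ : (Bmᵀ * Zm z1 z2) *ᵥ ((Amᵀ * Zm z1 z2) *ᵥ h) =
      Bmᵀ *ᵥ ((Zm z1 z2 * Amᵀ) *ᵥ (Zm z1 z2 *ᵥ h)) := by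
    simp only [mulVec_mulVec, Matrix.mul_assoc]
  rw [mulVec_mulVec]
  refine (forall_mulVec_pow_mulVec_eq_zero_iff_of_sq
    (bm_transpose_mul_zm_mulVec_am_transpose_mul_zm_sq_mulVec z1 z2) h).2 ?_ n
  rw [hZ, ← mulVec_mulVec, bm_transpose_mulVec_eq_zero_iff,
    bm_transpose_mulVec_zm_mul_am_transpose_eq_zero_iff, zm_mulVec]
  simp only [cons_val, h0, h1, h3]
  constructor <;> ring

lemma forall_bm_transpose_mulVec_zm_mul_am_transpose_pow_mulVec_eq_zero_iff (h : Fin 4 → ℂ) :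
    (∀ (z1 z2 : ℂ) (n : ℕ), Bmᵀ *ᵥ ((Zm z1 z2 * Amᵀ) ^ n *ᵥ h) = 0) ↔
      h 0 + h 1 = 0 ∧ h 2 = 0 ∧ h 3 = 0 := by
  simp only [forall_mulVec_pow_mulVec_eq_zero_iff_of_sq
    (bm_transpose_mulVec_zm_mul_am_transpose_sq_mulVec _ _)]
  simp_rw [bm_transpose_mulVec_zm_mul_am_transpose_eq_zero_iff, bm_transpose_mulVec_eq_zero_iff]
  constructor
  · intro H
    obtain ⟨h01, h23⟩ := H 0 1
    obtain ⟨-, h32⟩ := H 1 0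
    exact ⟨h01, by linear_combination (h23 - h32) / 2, by linear_combination (h23 + h32) / 2⟩
  · rintro ⟨h01, h2, h3⟩ z1 z2
    simp [h01, h2, h3]

lemma cm_mulVec_zm_mul_am_pow_mul_zm_mulVec_eq_zero {h : Fin 4 → ℂ} (h01 : h 0 + h 1 = 0)
    (h2 : h 2 = 0) (h3 : h 3 = 0) (z1 z2 : ℂ) (n : ℕ) :
    Cm *ᵥ (((Zm z1 z2 * Am) ^ n * Zm z1 z2) *ᵥ h) = 0 := by
  rw [← mulVec_mulVec]
  refine (forall_mulVec_pow_mulVec_eq_zero_iff_of_sq (cm_mulVec_zm_mul_am_sq_mulVec z1 z2) _).2 ?_ n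
  rw [cm_mulVec_eq_zero_iff, cm_mulVec_zm_mul_am_eq_zero_iff, zm_mulVec]
  simp only [cons_val, h2, h3]
  constructor
  · ring
  · linear_combination z1 * z2 * h01

lemma mem_range_smul_single_two_iff (h : Fin 4 → ℂ) :
    h ∈ Set.range (fun c : ℂ => c • ![0, 0, 1, 0]) ↔ h 0 = 0 ∧ h 1 = 0 ∧ h 3 = 0 := by
  constructor
  · rintro ⟨c, rfl⟩
    simp
  · rintro ⟨h0, h1, h3⟩
    exact ⟨h 2, by ext i; fin_cases i <;> simp [h0, h1, h3]⟩

lemma mem_range_smul_single_zero_sub_single_one_iff (h : Fin 4 → ℂ) :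
    h ∈ Set.range (fun c : ℂ => c • ![1, -1, 0, 0]) ↔ h 0 + h 1 = 0 ∧ h 2 = 0 ∧ h 3 = 0 := by
  constructor
  · rintro ⟨c, rfl⟩
    simp
  · rintro ⟨h01, h2, h3⟩
    exact ⟨h 0, by ext i; fin_cases i <;> simp [h2, h3, eq_neg_of_add_eq_zero_right h01]⟩

lemma span_p1_bvec_p2_bvec_am_p1_bvec_cvec_eq_top :
    Submodule.span ℂ ({P1 *ᵥ Bvec, P2 *ᵥ Bvec, Am *ᵥ (P1 *ᵥ Bvec), Cvec} : Set (Fin 4 → ℂ)) =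
      ⊤ := by
  have decomp (x : Fin 4 → ℂ) : x = (Real.sqrt 2 * x 0 : ℂ) • (P1 *ᵥ Bvec) +
      (Real.sqrt 2 * x 1 : ℂ) • (P2 *ᵥ Bvec) + (-2 * x 2) • (Am *ᵥ (P1 *ᵥ Bvec)) +
      (x 2 + x 3) • Cvec := by
    have hs : (Real.sqrt 2 : ℂ) ≠ 0 := by simp
    rw [am_mulVec]
    ext i; fin_cases i <;>
      simp [P1, P2, Bvec, Bm, Cvec, Cm, mulVec, dotProduct, Fin.sum_univ_succ,
        sqrt_two_inv_mul_self] <;>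
      field_simp
    ring
  refine eq_top_iff.2 fun x _ => ?_
  rw [decomp x]
  refine add_mem (add_mem (add_mem ?_ ?_) ?_) ?_ <;>
    exact Submodule.smul_mem _ _ (Submodule.subset_span (by simp))

theorem closely_connected_not_strictly_closely_connected :
    Submodule.span ℂ
        ({P1.mulVec Bvec, P2.mulVec Bvec, Am.mulVec (P1.mulVec Bvec), Cvec} :
          Set (Fin 4 → ℂ)) = ⊤ ∧
    ({h : Fin 4 → ℂ | ∀ (z1 z2 : ℂ) (n : ℕ),
        Cm.mulVec (((Zm z1 z2 * Am) ^ n).mulVec h) = 0} ∩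
      {h : Fin 4 → ℂ | ∀ z1 z2 : ℂ, z1 * z2 ≠ 0 → ∀ n : ℕ,
        (Bmᵀ).mulVec ((Wm z1 z2).mulVec (((Amᵀ * Wm z1 z2) ^ n).mulVec h)) = 0}
      = Set.range (fun c : ℂ => c • ![0, 0, 1, 0]) ∧
      (![0, 0, 1, 0] : Fin 4 → ℂ) ≠ 0) ∧
    ({h : Fin 4 → ℂ | ∀ (z1 z2 : ℂ) (n : ℕ),
        Cm.mulVec ((((Zm z1 z2 * Am) ^ n) * Zm z1 z2).mulVec h) = 0} ∩
      {h : Fin 4 → ℂ | ∀ (z1 z2 : ℂ) (n : ℕ),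
        (Bmᵀ).mulVec (((Zm z1 z2 * Amᵀ) ^ n).mulVec h) = 0}
      = Set.range (fun c : ℂ => c • ![1, -1, 0, 0]) ∧
      (![1, -1, 0, 0] : Fin 4 → ℂ) ≠ 0) := by
  refine ⟨span_p1_bvec_p2_bvec_am_p1_bvec_cvec_eq_top, ⟨?_, by simp⟩, ⟨?_, by simp⟩⟩
  · ext h
    rw [Set.mem_inter_iff, Set.mem_ofPred_eq, Set.mem_ofPred_eq, mem_range_smul_single_two_iff,
      forall_cm_mulVec_zm_mul_am_pow_mulVec_eq_zero_iff]
    refine ⟨And.left, fun hh => ⟨hh, fun z1 z2 _ => ?_⟩⟩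
    obtain ⟨h0, h1, h3⟩ := hh
    -- `Wm z1 z2` is `Zm z1⁻¹ z2⁻¹` by definition
    exact bm_transpose_mulVec_zm_mulVec_am_transpose_mul_zm_pow_mulVec_eq_zero h0 h1 h3 _ _
  · ext h
    rw [Set.mem_inter_iff, Set.mem_ofPred_eq, Set.mem_ofPred_eq,
      mem_range_smul_single_zero_sub_single_one_iff,
      forall_bm_transpose_mulVec_zm_mul_am_transpose_pow_mulVec_eq_zero_iff]
    refine ⟨And.right, fun hh => ⟨?_, hh⟩⟩
    obtain ⟨h01, h2, h3⟩ := hh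
    exact cm_mulVec_zm_mul_am_pow_mul_zm_mulVec_eq_zero h01 h2 h3
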